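/- arXiv:2211.04922 — 6 statements merged into one kernel-verified Lean document; each statement's English description precedes it below -/
import Mathlib

section
/- Let (E, 𝒫) be a set system with 𝒫 ⊆ 2^E, let π : 𝒫 → [0,1], and let ρ, ρ' ∈ [0,1]^E with ρ'_e ≤ ρ_e for all e ∈ E. If there exists a probability distribution x' on 2^E such that ∑_{S ∋ e} x'_S = ρ'_e for all e ∈ E and ∑_{S : S ∩ P ≠ ∅} x'_S ≥ π_P for all P ∈ 𝒫, then there also exists a probability distribution x on 2^E such that ∑_{S ∋ e} x_S = ρ_e for all e ∈ E and ∑_{S : S ∩ P ≠ ∅} x_S ≥ π_P for all P ∈ 𝒫. -/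
/-!
Raise the marginals one element at a time. For a fixed `e`, the image of a feasible `x` under
`S ↦ insert e S` has the same marginals except `1` at `e`, and hits every `P` at least as often
as `x`. Feasible decompositions are closed under convex combinations, so mixing `x` with this
image moves the marginal at `e` to any value between `ρ e` and `1` and changes nothing else.
-/

open Finset

/-- A feasible decomposition of marginals `ρ` for the set system `(E, Ps)` with
requirements `π`: a probability distribution `x` on `2^E` with marginals `ρ`
hitting each `P ∈ Ps` with probability at least `π P`. -/
def IsFeasibleDecomp {E : Type*} [Fintype E] [DecidableEq E]
    (Ps : Finset (Finset E)) (π : Finset E → ℝ) (ρ : E → ℝ)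
    (x : Finset E → ℝ) : Prop :=
  (∀ S, 0 ≤ x S) ∧ (∑ S : Finset E, x S = 1) ∧
  (∀ e : E, ∑ S ∈ Finset.univ.filter (fun S : Finset E => e ∈ S), x S = ρ e) ∧
  (∀ P ∈ Ps, π P ≤ ∑ S ∈ Finset.univ.filter (fun S : Finset E => (S ∩ P).Nonempty), x S)

section Pushforward

variable {α β M : Type*} [Fintype α] [Fintype β] [DecidableEq β] [AddCommMonoid M]

def pushforward (f : α → β) (x : α → M) (b : β) : M :=
  ∑ a ∈ univ.filter (fun a => f a = b), x a

theorem sum_filter_pushforward (f : α → β) (x : α → M) (p : β → Prop) [DecidablePred p] :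
    ∑ b ∈ univ.filter p, pushforward f x b = ∑ a ∈ univ.filter (fun a => p (f a)), x a := by
  rw [← sum_fiberwise_of_maps_to (t := univ.filter p) (g := f) (by simp)]
  refine sum_congr rfl fun b hb => ?_
  rw [pushforward, filter_filter]
  refine sum_congr (filter_congr fun a _ => ?_) fun _ _ => rfl
  simp only [mem_filter, mem_univ, true_and] at hb
  exact ⟨fun h => ⟨h ▸ hb, h⟩, And.right⟩

theorem sum_pushforward (f : α → β) (x : α → M) :
    ∑ b, pushforward f x b = ∑ a, x a := by
  simpa using sum_filter_pushforward f x (fun _ => True)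

end Pushforward

namespace IsFeasibleDecomp

variable {E : Type*} [Fintype E] [DecidableEq E] {Ps : Finset (Finset E)} {π : Finset E → ℝ}
  {ρ ρ₁ ρ₂ : E → ℝ} {x y : Finset E → ℝ}

theorem smul_add_smul (hx : IsFeasibleDecomp Ps π ρ₁ x) (hy : IsFeasibleDecomp Ps π ρ₂ y)
    {a b : ℝ} (ha : 0 ≤ a) (hb : 0 ≤ b) (hab : a + b = 1) :
    IsFeasibleDecomp Ps π (a • ρ₁ + b • ρ₂) (a • x + b • y) := by
  obtain ⟨hx₀, hx₁, hxρ, hxπ⟩ := hx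
  obtain ⟨hy₀, hy₁, hyρ, hyπ⟩ := hy
  simp only [IsFeasibleDecomp, Pi.add_apply, Pi.smul_apply, smul_eq_mul, sum_add_distrib,
    ← mul_sum, hx₁, hy₁, hxρ, hyρ]
  refine ⟨fun S => add_nonneg (mul_nonneg ha (hx₀ S)) (mul_nonneg hb (hy₀ S)), by simpa using hab,
    fun _ => trivial, fun P hP => ?_⟩
  calc π P = a * π P + b * π P := by rw [← add_mul, hab, one_mul]
    _ ≤ _ := by gcongr; exacts [hxπ P hP, hyπ P hP]

theorem pushforward_insert (hx : IsFeasibleDecomp Ps π ρ x) (e : E) :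
    IsFeasibleDecomp Ps π (Function.update ρ e 1) (pushforward (insert e) x) := by
  obtain ⟨hx₀, hx₁, hxρ, hxπ⟩ := hx
  refine ⟨fun T => sum_nonneg fun S _ => hx₀ S, by rw [sum_pushforward, hx₁], fun f => ?_,
    fun P hP => ?_⟩
  · rw [sum_filter_pushforward]
    rcases eq_or_ne f e with rfl | hfe
    · simpa using hx₁
    · simpa [hfe] using hxρ f
  · rw [sum_filter_pushforward]
    refine (hxπ P hP).trans (sum_le_sum_of_subset_of_nonneg ?_ fun S _ _ => hx₀ S)
    intro S
    simp only [mem_filter, mem_univ, true_and]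
    exact fun h => h.mono (inter_subset_inter (subset_insert e S) le_rfl)

theorem exists_update (hx : IsFeasibleDecomp Ps π ρ x) (e : E) {r : ℝ} (hle : ρ e ≤ r)
    (hr : r ≤ 1) : ∃ y, IsFeasibleDecomp Ps π (Function.update ρ e r) y := by
  -- `c` solves `(1 - c) * ρ e + c = r`; when `ρ e = 1`, division by zero gives `c = 0`,
  -- which is right since then `r = 1` and nothing has to change.
  set c := (r - ρ e) / (1 - ρ e)
  have hc₀ : 0 ≤ c := div_nonneg (by linarith) (by linarith)
  have hc₁ : c ≤ 1 := div_le_one_of_le₀ (by linarith) (by linarith)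
  have hρ : (1 - c) • ρ + c • Function.update ρ e 1 = Function.update ρ e r := by
    ext f
    rcases eq_or_ne f e with rfl | hfe
    · rcases (show ρ f ≤ 1 by linarith).eq_or_lt with h | h
      · simp [c, h, show r = 1 by linarith]
      · simp only [Pi.add_apply, Pi.smul_apply, smul_eq_mul, Function.update_self, c]
        field_simp
        ring
    · simp only [Pi.add_apply, Pi.smul_apply, smul_eq_mul, Function.update_of_ne hfe]
      ring
  exact ⟨_, hρ ▸ hx.smul_add_smul (hx.pushforward_insert e) (by linarith) hc₀ (by ring)⟩

end IsFeasibleDecomp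

theorem feasible_of_le_general {E : Type*} [Fintype E] [DecidableEq E]
    (Ps : Finset (Finset E)) (π : Finset E → ℝ)
    (ρ ρ' : E → ℝ)
    (hρ : ∀ e, 0 ≤ ρ e ∧ ρ e ≤ 1)
    (hle : ∀ e, ρ' e ≤ ρ e)
    (x' : Finset E → ℝ) (hx' : IsFeasibleDecomp Ps π ρ' x') :
    ∃ x : Finset E → ℝ, IsFeasibleDecomp Ps π ρ x := by
  suffices ∀ A : Finset E, ∃ x, IsFeasibleDecomp Ps π (A.piecewise ρ ρ') x by
    simpa using this univ
  intro A
  induction A using Finset.induction_on with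
  | empty => exact ⟨x', by simpa using hx'⟩
  | insert a A ha ih =>
    obtain ⟨y, hy⟩ := ih
    rw [piecewise_insert]
    exact hy.exists_update a (by simpa [ha] using hle a) (hρ a).2

/-- Monotonicity of feasibility in the marginals: if `ρ' ≤ ρ` pointwise and `ρ'`
admits a feasible decomposition, then so does `ρ`. -/
theorem feasible_of_le {E : Type*} [Fintype E] [DecidableEq E]
    (Ps : Finset (Finset E)) (π : Finset E → ℝ)
    (hπ : ∀ P ∈ Ps, 0 ≤ π P ∧ π P ≤ 1)
    (ρ ρ' : E → ℝ)
    (hρ : ∀ e, 0 ≤ ρ e ∧ ρ e ≤ 1) (hρ' : ∀ e, 0 ≤ ρ' e ∧ ρ' e ≤ 1)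
    (hle : ∀ e, ρ' e ≤ ρ e)
    (x' : Finset E → ℝ) (hx' : IsFeasibleDecomp Ps π ρ' x') :
    ∃ x : Finset E → ℝ, IsFeasibleDecomp Ps π ρ x :=
  feasible_of_le_general Ps π ρ ρ' hρ hle x' hx'
end

section
/- Let E be a finite set and 𝒫 ⊆ 2^E a set system such that the polyhedron Y_𝒫 := {y ∈ ℝ_+^E : ∑_{e∈P} y_e ≥ 1 for all P ∈ 𝒫} is integral (weak max-flow/min-cut property). Let μ ∈ [0,1]^E and define π_P := 1 − ∑_{e∈P} μ_e for P ∈ 𝒫. Then for every ρ ∈ [0,1]^E satisfying ∑_{e∈P} ρ_e ≥ π_P for all P ∈ 𝒫, there exists a probability distribution x on 2^E with ∑_{S ∋ e} x_S = ρ_e for all e ∈ E and ∑_{S : S∩P ≠ ∅} x_S ≥ π_P for all P ∈ 𝒫. -/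
open Finset

/-- The covering polyhedron `Y_𝒫 = {y ∈ ℝ₊^E : ∑_{e ∈ P} y_e ≥ 1 ∀ P ∈ 𝒫}`. -/
def coverPolyhedron {E : Type*} [Fintype E] (Ps : Finset (Finset E)) : Set (E → ℝ) :=
  {y | (∀ e, 0 ≤ y e) ∧ ∀ P ∈ Ps, 1 ≤ ∑ e ∈ P, y e}

/-!
Under the weak MFMC property the vertices of `Y_𝒫` are incidence vectors of transversals (sets
meeting every `P ∈ 𝒫`), so by separation every `z ∈ Y_𝒫` dominates a convex combination `θ` of
such incidence vectors. Take `z = ρ + μ`, which lies in `Y_𝒫` by (⋆). Draw a transversal `T` from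
`θ`, then keep each `e ∈ T` with probability `p_e` and each `e ∉ T` with probability `q_e`, chosen
so that the marginals are `ρ` and as little of `T` as possible is dropped. Since `T` meets `P`, the set `P` is missed only if an element of
`T ∩ P` is dropped, which happens with probability at most
`∑_{e ∈ P} c_e (1 - p_e) = ∑_{e ∈ P} (c_e - ρ_e)⁺ ≤ ∑_{e ∈ P} μ_e`,
where `c_e = θ{T ∋ e} ≤ ρ_e + μ_e`.
-/

open Pointwise

section CoverPolyhedron

variable {E : Type*} [Fintype E] {Ps : Finset (Finset E)}

theorem isClosed_coverPolyhedron : IsClosed (coverPolyhedron Ps) := by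
  have : coverPolyhedron Ps =
      (⋂ e, {y : E → ℝ | 0 ≤ y e}) ∩ ⋂ P ∈ Ps, {y | 1 ≤ ∑ e ∈ P, y e} := by
    ext; simp [coverPolyhedron]
  rw [this]
  exact (isClosed_iInter fun e => isClosed_le continuous_const (continuous_apply e)).inter
    (isClosed_biInter fun P _ => isClosed_le continuous_const <|
      continuous_finsetSum _ fun e _ => continuous_apply e)

theorem inf_one_mem_coverPolyhedron_inter_Icc {y : E → ℝ} (hy : y ∈ coverPolyhedron Ps) :
    y ⊓ 1 ∈ coverPolyhedron Ps ∩ Set.Icc 0 1 := by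
  obtain ⟨hy0, hy1⟩ := hy
  have h0 : ∀ e, 0 ≤ (y ⊓ 1) e := fun e => le_min (hy0 e) zero_le_one
  refine ⟨⟨h0, fun P hP => ?_⟩, h0, inf_le_right⟩
  by_cases h : ∃ e ∈ P, 1 ≤ y e
  · obtain ⟨e, he, hle⟩ := h
    calc 1 = (y ⊓ 1) e := (min_eq_right hle).symm
      _ ≤ ∑ e ∈ P, (y ⊓ 1) e := single_le_sum (fun f _ => h0 f) he
  · simp only [not_exists, not_and, not_le] at h
    calc 1 ≤ ∑ e ∈ P, y e := hy1 P hP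
      _ = ∑ e ∈ P, (y ⊓ 1) e := sum_congr rfl fun e he => (min_eq_left (h e he).le).symm

theorem exists_isMinOn_dotProduct_coverPolyhedron {w : E → ℝ} (hw : 0 ≤ w)
    (hne : (coverPolyhedron Ps).Nonempty) :
    ∃ v ∈ coverPolyhedron Ps, IsMinOn (w ⬝ᵥ ·) (coverPolyhedron Ps) v := by
  obtain ⟨z, hz⟩ := hne
  have hK : IsCompact (coverPolyhedron Ps ∩ Set.Icc 0 1) :=
    isCompact_Icc.inter_left isClosed_coverPolyhedron
  obtain ⟨v, hv, hmin⟩ := hK.exists_isMinOn ⟨_, inf_one_mem_coverPolyhedron_inter_Icc hz⟩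
    (continuous_const.dotProduct continuous_id).continuousOn
  refine ⟨v, hv.1, fun y hy => ?_⟩
  calc w ⬝ᵥ v ≤ w ⬝ᵥ (y ⊓ 1) := hmin (inf_one_mem_coverPolyhedron_inter_Icc hy)
    _ ≤ w ⬝ᵥ y := dotProduct_le_dotProduct_of_nonneg_left inf_le_left hw

theorem le_one_of_isMinOn_dotProduct {w : E → ℝ} (hw : ∀ e, 0 < w e) {v : E → ℝ}
    (hv : v ∈ coverPolyhedron Ps) (hmin : IsMinOn (w ⬝ᵥ ·) (coverPolyhedron Ps) v) : v ≤ 1 := by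
  intro e
  by_contra! he
  have hlt : w ⬝ᵥ (v ⊓ 1) < w ⬝ᵥ v :=
    sum_lt_sum (fun f _ => mul_le_mul_of_nonneg_left inf_le_left (hw f).le)
      ⟨e, mem_univ e, mul_lt_mul_of_pos_left (min_lt_of_right_lt he) (hw e)⟩
  exact hlt.not_ge (hmin (inf_one_mem_coverPolyhedron_inter_Icc hv).1)

end CoverPolyhedron

section Transversal

variable {E : Type*} [DecidableEq E]

def IsTransversal (Ps : Finset (Finset E)) (T : Finset E) : Prop :=
  ∀ P ∈ Ps, (T ∩ P).Nonempty

def incidenceVector (T : Finset E) : E → ℝ := fun e => if e ∈ T then 1 else 0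

theorem incidenceVector_mem_Icc (T : Finset E) : incidenceVector T ∈ Set.Icc 0 1 :=
  ⟨fun e => by unfold incidenceVector; split_ifs <;> norm_num,
    fun e => by unfold incidenceVector; split_ifs <;> norm_num⟩

variable [Fintype E] {Ps : Finset (Finset E)}

theorem dotProduct_incidenceVector (w : E → ℝ) (T : Finset E) :
    w ⬝ᵥ incidenceVector T = ∑ e ∈ T, w e := by
  simp [dotProduct, incidenceVector]

theorem IsTransversal.of_incidenceVector_mem {T : Finset E}
    (h : incidenceVector T ∈ coverPolyhedron Ps) : IsTransversal Ps T := by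
  intro P hP
  by_contra hTP
  have h1 := h.2 P hP
  simp only [incidenceVector] at h1
  rw [sum_eq_zero fun e he => if_neg fun heT => hTP ⟨e, mem_inter.2 ⟨heT, he⟩⟩] at h1
  norm_num at h1

theorem isTransversal_univ (hne : (coverPolyhedron Ps).Nonempty) : IsTransversal Ps univ := by
  obtain ⟨z, -, hz⟩ := hne
  intro P hP
  rw [univ_inter, nonempty_iff_ne_empty]
  rintro rfl
  exact absurd (hz ∅ hP) (by simp)

theorem eq_incidenceVector_of_mem_Icc {v : E → ℝ} (hv : v ∈ Set.Icc 0 1)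
    (hint : ∀ e, ∃ n : ℤ, v e = n) : v = incidenceVector {e | v e = 1} := by
  ext e
  obtain ⟨n, hn⟩ := hint e
  have h0 : (0 : ℝ) ≤ n := hn ▸ hv.1 e
  have h1 : (n : ℝ) ≤ 1 := hn ▸ hv.2 e
  have : n = 0 ∨ n = 1 := by
    have : 0 ≤ n := by exact_mod_cast h0
    have : n ≤ 1 := by exact_mod_cast h1
    omega
  rcases this with rfl | rfl <;> simp [incidenceVector, hn]

/-- Positivity of `w` confines the minimizers of `w ⬝ᵥ ·` to the unit cube, so they form a compact
exposed face; its extreme points are extreme in `coverPolyhedron Ps`, hence incidence vectors. -/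
theorem exists_isTransversal_dotProduct_le
    (hMFMC : ∀ y ∈ Set.extremePoints ℝ (coverPolyhedron Ps), ∀ e, ∃ n : ℤ, y e = n)
    {w : E → ℝ} (hw : ∀ e, 0 < w e) {z : E → ℝ} (hz : z ∈ coverPolyhedron Ps) :
    ∃ T, IsTransversal Ps T ∧ ∑ e ∈ T, w e ≤ w ⬝ᵥ z := by
  set l : StrongDual ℝ (E → ℝ) := -LinearMap.toContinuousLinearMap (dotProductBilin ℝ ℝ w)
  have hF : IsExposed ℝ (coverPolyhedron Ps) (l.toExposed (coverPolyhedron Ps)) :=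
    ContinuousLinearMap.toExposed.isExposed
  have hmin : ∀ v ∈ l.toExposed (coverPolyhedron Ps), IsMinOn (w ⬝ᵥ ·) (coverPolyhedron Ps) v :=
    fun v hv y hy => by simpa [l] using hv.2 y hy
  obtain ⟨v₀, hv₀, hv₀min⟩ := exists_isMinOn_dotProduct_coverPolyhedron (fun e => (hw e).le) ⟨z, hz⟩
  have hcube : l.toExposed (coverPolyhedron Ps) ⊆ Set.Icc 0 1 :=
    fun v hv => ⟨hv.1.1, le_one_of_isMinOn_dotProduct hw hv.1 (hmin v hv)⟩
  obtain ⟨v, hv⟩ := (isCompact_Icc.of_isClosed_subset (hF.isClosed isClosed_coverPolyhedron)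
    hcube).extremePoints_nonempty ⟨v₀, hv₀, fun y hy => by simpa [l] using hv₀min hy⟩
  have hvY := hF.isExtreme.extremePoints_subset_extremePoints hv
  have hvT := eq_incidenceVector_of_mem_Icc (hcube hv.1) (hMFMC v hvY)
  refine ⟨_, .of_incidenceVector_mem (hvT ▸ hvY.1), ?_⟩
  rw [← dotProduct_incidenceVector, ← hvT]
  exact hmin v hv.1 hz

def transversalSimplex (Ps : Finset (Finset E)) : Set (Finset E → ℝ) :=
  stdSimplex ℝ (Finset E) ∩ {T | ¬IsTransversal Ps T}.pi fun _ => {0}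

theorem single_mem_transversalSimplex {T : Finset E} (hT : IsTransversal Ps T) :
    Pi.single T 1 ∈ transversalSimplex Ps :=
  ⟨single_mem_stdSimplex ℝ T, fun T' hT' => Pi.single_eq_of_ne (by rintro rfl; exact hT' hT) _⟩

theorem isCompact_transversalSimplex : IsCompact (transversalSimplex Ps) :=
  (isCompact_stdSimplex ℝ _).inter_right (isClosed_set_pi fun _ _ => isClosed_singleton)

theorem convex_transversalSimplex : Convex ℝ (transversalSimplex Ps) :=
  (convex_stdSimplex ℝ _).inter (convex_pi fun _ _ => convex_singleton 0)

theorem nonneg_of_forall_lt_dotProduct_add {w d : E → ℝ} {u : ℝ}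
    (h : ∀ r, 0 ≤ r → u < w ⬝ᵥ (d + r)) : 0 ≤ w := by
  intro e
  by_contra! hw
  change w e < 0 at hw
  have hd : u < w ⬝ᵥ d := by simpa using h 0 le_rfl
  set t := (w ⬝ᵥ d - u) / -w e
  have ht : 0 ≤ t := div_nonneg (by linarith) (by linarith)
  have := h (t • Pi.single e 1) fun f => by
    simpa [Pi.single_apply] using by split_ifs <;> positivity
  rw [dotProduct_add, dotProduct_smul, dotProduct_single, smul_eq_mul, mul_one,
    div_mul_eq_mul_div, div_neg, mul_div_cancel_right₀ _ hw.ne] at this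
  linarith

/-- If `z` were outside the dominant `D` of the transversals' polytope, a hyperplane would separate
them. Its normal `w` is nonnegative because `D` is upward closed, and shifting `w` by a small
`ε > 0` contradicts `exists_isTransversal_dotProduct_le`. -/
theorem exists_mem_transversalSimplex_le
    (hMFMC : ∀ y ∈ Set.extremePoints ℝ (coverPolyhedron Ps), ∀ e, ∃ n : ℤ, y e = n)
    {z : E → ℝ} (hz : z ∈ coverPolyhedron Ps) :
    ∃ θ ∈ transversalSimplex Ps, ∑ T, θ T • incidenceVector T ≤ z := by
  set L := Fintype.linearCombination ℝ (incidenceVector (E := E))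
  set D := L '' transversalSimplex Ps + Set.Ici (0 : E → ℝ)
  suffices hzD : z ∈ D by
    obtain ⟨_, ⟨θ, hθ, rfl⟩, r, hr, rfl⟩ := hzD
    exact ⟨θ, hθ, le_add_of_nonneg_right hr⟩
  by_contra hzD
  obtain ⟨f, u, hfz, hfD⟩ := geometric_hahn_banach_point_closed
    ((convex_transversalSimplex.linear_image L).add (convex_Ici 0))
    (isClosed_Ici.add_left_of_isCompact
      (isCompact_transversalSimplex.image L.continuous_of_finiteDimensional)) hzD
  set w : E → ℝ := fun e => f fun j => if e = j then 1 else 0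
  have hf : ∀ y, f y = w ⬝ᵥ y := fun y => by
    rw [dotProduct_comm]; exact LinearMap.pi_apply_eq_sum_univ f.toLinearMap y
  have hmem : ∀ T, IsTransversal Ps T → ∀ r ≥ 0, incidenceVector T + r ∈ D := fun T hT r hr =>
    ⟨_, ⟨_, single_mem_transversalSimplex hT, by simp [L]⟩, r, hr, rfl⟩
  have hw : 0 ≤ w := nonneg_of_forall_lt_dotProduct_add fun r hr =>
    hf _ ▸ hfD _ (hmem _ (isTransversal_univ ⟨z, hz⟩) r hr)
  have hT : ∀ T, IsTransversal Ps T → u < ∑ e ∈ T, w e := fun T hT => by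
    simpa [hf, dotProduct_incidenceVector] using hfD _ (hmem T hT 0 le_rfl)
  have hsum : 0 ≤ ∑ e, z e := sum_nonneg fun e _ => hz.1 e
  set ε := (u - w ⬝ᵥ z) / (1 + ∑ e, z e)
  have hε : 0 < ε := div_pos (by linarith [hf z]) (by linarith)
  obtain ⟨T, hTr, hTz⟩ := exists_isTransversal_dotProduct_le hMFMC
    (w := w + ε • 1) (fun e => by simpa using add_pos_of_nonneg_of_pos (hw e) hε) hz
  have hεz : ε * (1 + ∑ e, z e) = u - w ⬝ᵥ z := div_mul_cancel₀ _ (by positivity)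
  have hwT : ∑ e ∈ T, w e ≤ ∑ e ∈ T, (w + ε • 1) e :=
    sum_le_sum fun e _ => by simp [hε.le]
  rw [add_dotProduct, smul_dotProduct, one_dotProduct, smul_eq_mul] at hTz
  linarith [hT T hTr]

end Transversal

section ProductWeight

variable {E : Type*} [Fintype E] [DecidableEq E]

/-- The probability that a random set containing each `e` independently with probability `r e`
equals `S`. -/
def productWeight (r : E → ℝ) (S : Finset E) : ℝ := (∏ e ∈ S, r e) * ∏ e ∈ Sᶜ, (1 - r e)

theorem productWeight_nonneg {r : E → ℝ} (hr : ∀ e, r e ∈ Set.Icc 0 1) (S : Finset E) :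
    0 ≤ productWeight r S :=
  mul_nonneg (prod_nonneg fun e _ => (hr e).1) (prod_nonneg fun e _ => sub_nonneg.2 (hr e).2)

theorem sum_productWeight (r : E → ℝ) : ∑ S, productWeight r S = 1 := by
  simp [productWeight, ← Fintype.prod_add]

theorem sum_productWeight_filter_disjoint (r : E → ℝ) (A : Finset E) :
    ∑ S with Disjoint S A, productWeight r S = ∏ e ∈ A, (1 - r e) := by
  -- zeroing `r` on `A` in `Fintype.prod_add` kills exactly the sets meeting `A`
  have h := Fintype.prod_add (fun e => if e ∉ A then r e else 0) (fun e => 1 - r e)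
  simp only [prod_ite_zero, ← disjoint_left, ite_mul, zero_mul, sum_ite, sum_const_zero,
    add_zero] at h
  calc ∑ S with Disjoint S A, productWeight r S
      = ∏ e, ((if e ∉ A then r e else 0) + (1 - r e)) := h.symm
    _ = ∏ e, if e ∈ A then 1 - r e else 1 := prod_congr rfl fun e _ => by split_ifs <;> ring
    _ = ∏ e ∈ A, (1 - r e) := by rw [prod_ite_mem, univ_inter]

theorem sum_productWeight_filter_not_disjoint (r : E → ℝ) (A : Finset E) :
    ∑ S with ¬Disjoint S A, productWeight r S = 1 - ∏ e ∈ A, (1 - r e) := by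
  rw [← sum_productWeight_filter_disjoint, ← sum_productWeight r,
    ← sum_filter_add_sum_filter_not univ fun S => Disjoint S A, add_sub_cancel_left]

theorem sum_productWeight_filter_mem (r : E → ℝ) (e : E) :
    ∑ S with e ∈ S, productWeight r S = r e := by
  simpa [disjoint_singleton_right] using sum_productWeight_filter_not_disjoint r {e}

end ProductWeight

theorem prod_one_sub_le_one_sub {ι : Type*} {s : Finset ι} {a : ι → ℝ}
    (ha : ∀ i ∈ s, a i ∈ Set.Icc 0 1) {i : ι} (hi : i ∈ s) : ∏ j ∈ s, (1 - a j) ≤ 1 - a i :=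
  (prod_le_prod_of_subset_of_le_one (singleton_subset_iff.2 hi)
    (fun j hj => sub_nonneg.2 (ha j hj).2) fun j hj _ => sub_le_self _ (ha j hj).1).trans_eq
    (prod_singleton _ _)

theorem exists_mix_eq {c ρ : ℝ} (hc : c ∈ Set.Icc 0 1) (hρ : ρ ∈ Set.Icc 0 1) :
    ∃ p ∈ Set.Icc (0 : ℝ) 1, ∃ q ∈ Set.Icc (0 : ℝ) 1,
      c * p + (1 - c) * q = ρ ∧ c * (1 - p) = max (c - ρ) 0 := by
  obtain ⟨hc0, hc1⟩ := hc
  obtain ⟨hρ0, hρ1⟩ := hρ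
  rcases lt_or_ge ρ c with hρc | hcρ
  · have hc : c ≠ 0 := (hρ0.trans_lt hρc).ne'
    refine ⟨ρ / c, ⟨by positivity, div_le_one_of_le₀ hρc.le hc0⟩, 0, ⟨le_rfl, zero_le_one⟩,
      by field_simp; ring, ?_⟩
    rw [max_eq_left (by linarith)]
    field_simp
  rcases hc1.lt_or_eq with hc1 | rfl
  · refine ⟨1, ⟨zero_le_one, le_rfl⟩, (ρ - c) / (1 - c),
      ⟨div_nonneg (by linarith) (by linarith), (div_le_one (by linarith)).2 (by linarith)⟩,
      by field_simp; ring, by simp [hcρ]⟩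
  · exact ⟨1, ⟨zero_le_one, le_rfl⟩, 0, ⟨le_rfl, zero_le_one⟩, by linarith, by simp [hcρ]⟩

section Rounding

variable {E : Type*} [DecidableEq E]

theorem prod_one_sub_ite_le_sum {T P : Finset E} (hTP : (T ∩ P).Nonempty) {p q : E → ℝ}
    (hp : ∀ e, p e ∈ Set.Icc 0 1) (hq : ∀ e, q e ∈ Set.Icc 0 1) :
    ∏ e ∈ P, (1 - if e ∈ T then p e else q e) ≤ ∑ e ∈ P, incidenceVector T e * (1 - p e) := by
  obtain ⟨e₀, he₀⟩ := hTP
  obtain ⟨he₀T, he₀P⟩ := mem_inter.1 he₀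
  calc ∏ e ∈ P, (1 - if e ∈ T then p e else q e) ≤ 1 - p e₀ := by
        simpa [he₀T] using prod_one_sub_le_one_sub
          (fun e _ => show (if e ∈ T then p e else q e) ∈ Set.Icc 0 1 by
            split_ifs; exacts [hp e, hq e]) he₀P
    _ = incidenceVector T e₀ * (1 - p e₀) := by simp [incidenceVector, he₀T]
    _ ≤ ∑ e ∈ P, incidenceVector T e * (1 - p e) := single_le_sum (fun e _ =>
        mul_nonneg ((incidenceVector_mem_Icc T).1 e) (sub_nonneg.2 (hp e).2)) he₀P

variable [Fintype E] {Ps : Finset (Finset E)}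

theorem sum_smul_incidenceVector_mem_Icc {θ : Finset E → ℝ} (hθ : θ ∈ stdSimplex ℝ (Finset E))
    (e : E) : (∑ T, θ T • incidenceVector T) e ∈ Set.Icc 0 1 := by
  simp only [Finset.sum_apply, Pi.smul_apply, smul_eq_mul]
  refine ⟨sum_nonneg fun T _ => mul_nonneg (hθ.1 T) ((incidenceVector_mem_Icc T).1 e), ?_⟩
  calc ∑ T, θ T * incidenceVector T e ≤ ∑ T, θ T :=
        sum_le_sum fun T _ => mul_le_of_le_one_right (hθ.1 T) ((incidenceVector_mem_Icc T).2 e)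
    _ = 1 := hθ.2

/-- The decomposition is the law of the set obtained by drawing a transversal `T` from `θ` and then
keeping each `e` independently with probability `p e` if `e ∈ T` and `q e` otherwise. -/
theorem isFeasibleDecomp_rounding {θ : Finset E → ℝ} (hθ : θ ∈ transversalSimplex Ps)
    {c p q ρ : E → ℝ} (hc : ∑ T, θ T • incidenceVector T = c) (hp : ∀ e, p e ∈ Set.Icc 0 1)
    (hq : ∀ e, q e ∈ Set.Icc 0 1) (hρ : ∀ e, c e * p e + (1 - c e) * q e = ρ e)
    {π : Finset E → ℝ} (hπ : ∀ P ∈ Ps, π P ≤ 1 - ∑ e ∈ P, c e * (1 - p e)) :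
    IsFeasibleDecomp Ps π ρ fun S =>
      ∑ T, θ T * productWeight (fun e => if e ∈ T then p e else q e) S := by
  set r : Finset E → E → ℝ := fun T e => if e ∈ T then p e else q e
  show IsFeasibleDecomp Ps π ρ fun S => ∑ T, θ T * productWeight (r T) S
  have hr : ∀ T e, r T e ∈ Set.Icc 0 1 := fun T e => by
    simp only [r]; split_ifs; exacts [hp e, hq e]
  obtain ⟨⟨hθ0, hθ1⟩, hθT⟩ := hθ
  have hc_apply : ∀ e, c e = ∑ T, θ T * incidenceVector T e := fun e => by
    simp [← hc, Finset.sum_apply]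
  have hmix : ∀ s : Finset (Finset E), ∑ S ∈ s, ∑ T, θ T * productWeight (r T) S =
      ∑ T, θ T * ∑ S ∈ s, productWeight (r T) S := fun s => by
    rw [sum_comm]; simp_rw [mul_sum]
  refine ⟨fun S => sum_nonneg fun T _ => mul_nonneg (hθ0 T) (productWeight_nonneg (hr T) S),
    (hmix univ).trans (by simp [sum_productWeight, hθ1]), fun e => ?_, fun P hP => ?_⟩
  · rw [hmix, ← hρ, hc_apply]
    simp_rw [sum_productWeight_filter_mem]
    calc ∑ T, θ T * r T e
        = ∑ T, (θ T * incidenceVector T e * p e + (θ T - θ T * incidenceVector T e) * q e) :=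
          sum_congr rfl fun T _ => by simp only [r, incidenceVector]; split_ifs <;> ring
      _ = _ := by rw [sum_add_distrib, ← sum_mul, ← sum_mul, sum_sub_distrib, hθ1]
  · have hT : ∀ T, θ T * (1 - ∑ e ∈ P, incidenceVector T e * (1 - p e)) ≤
        θ T * (1 - ∏ e ∈ P, (1 - r T e)) := by
      intro T
      rcases (hθ0 T).eq_or_lt with h0 | hpos
      · simp [← h0]
      have hTr : IsTransversal Ps T := by_contra fun hT => hpos.ne' (hθT T hT)
      exact mul_le_mul_of_nonneg_left
        (sub_le_sub_left (prod_one_sub_ite_le_sum (hTr P hP) hp hq) 1) hpos.le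
    simp_rw [hmix, ← not_disjoint_iff_nonempty_inter, sum_productWeight_filter_not_disjoint]
    calc π P ≤ 1 - ∑ e ∈ P, c e * (1 - p e) := hπ P hP
      _ = ∑ T, θ T * (1 - ∑ e ∈ P, incidenceVector T e * (1 - p e)) := by
        simp only [hc_apply, mul_sub, mul_one, sum_sub_distrib, hθ1, sum_mul, mul_sum, mul_assoc]
        rw [sum_comm (s := P), sum_comm (s := P)]
      _ ≤ _ := sum_le_sum fun T _ => hT T

end Rounding

/-- If `(E, 𝒫)` has the weak max-flow/min-cut property (the covering polyhedron is
integral), then for affine requirements `π_P = 1 − ∑_{e∈P} μ_e` the necessary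
condition (⋆) is sufficient for existence of a feasible decomposition. -/
theorem mfmc_implies_cond_sufficient {E : Type*} [Fintype E] [DecidableEq E]
    (Ps : Finset (Finset E))
    (hMFMC : ∀ y ∈ Set.extremePoints ℝ (coverPolyhedron Ps), ∀ e, ∃ n : ℤ, y e = n)
    (μ : E → ℝ) (hμ : ∀ e, 0 ≤ μ e ∧ μ e ≤ 1)
    (π : Finset E → ℝ) (hπ : ∀ P ∈ Ps, π P = 1 - ∑ e ∈ P, μ e)
    (ρ : E → ℝ) (hρ : ∀ e, 0 ≤ ρ e ∧ ρ e ≤ 1)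
    (hcond : ∀ P ∈ Ps, π P ≤ ∑ e ∈ P, ρ e) :
    ∃ x : Finset E → ℝ, IsFeasibleDecomp Ps π ρ x := by
  have hz : ρ + μ ∈ coverPolyhedron Ps := ⟨fun e => add_nonneg (hρ e).1 (hμ e).1, fun P hP => by
    simp only [Pi.add_apply, sum_add_distrib]; linarith [hcond P hP, hπ P hP]⟩
  obtain ⟨θ, hθ, hθz⟩ := exists_mem_transversalSimplex_le hMFMC hz
  set c := ∑ T, θ T • incidenceVector T
  choose p hp q hq hρpq hloss using fun e =>
    exists_mix_eq (sum_smul_incidenceVector_mem_Icc hθ.1 e) (hρ e)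
  refine ⟨_, isFeasibleDecomp_rounding hθ rfl hp hq hρpq fun P hP => ?_⟩
  have hdrop : ∀ e, c e * (1 - p e) ≤ μ e := fun e => by
    rw [hloss]; exact max_le (by linarith [hθz e, Pi.add_apply ρ μ e]) (hμ e).1
  rw [hπ P hP]
  linarith [sum_le_sum fun e (_ : e ∈ P) => hdrop e]
end

section
/- Let E be a finite set and 𝒫 ⊆ 2^E. Suppose that for all μ ∈ [0,1]^E and all ρ ∈ [0,1]^E satisfying ∑_{e∈P} ρ_e ≥ 1 − ∑_{e∈P} μ_e for all P ∈ 𝒫, there exists a probability distribution x on 2^E with ∑_{S∋e} x_S = ρ_e for all e and ∑_{S : S∩P ≠ ∅} x_S ≥ 1 − ∑_{e∈P} μ_e for all P ∈ 𝒫. Then every extreme point of the polyhedron Y_𝒫 := {y ∈ ℝ_+^E : ∑_{e∈P} y_e ≥ 1 ∀P ∈ 𝒫} is a 0-1 vector, i.e., Y_𝒫 is integral. -/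
open Finset

/-! With `μ = 0` the hypothesis turns any `y ∈ Y_𝒫 ∩ [0,1]^E` into a probability distribution on
`2^E` with marginals `y` that hits every `P ∈ 𝒫` almost surely, so it is supported on covers
(sets meeting every `P ∈ 𝒫`): `y` is a convex combination of incidence vectors of covers, all of
which lie in `Y_𝒫`. An extreme point of `Y_𝒫` is therefore itself such an incidence vector, once
we know it lies in `[0,1]^E`; this holds because otherwise `y` is the midpoint of its truncation
`min y 1` and of `2y - min y 1`, both in `Y_𝒫`. -/

theorem mem_of_mem_extremePoints_of_mem_convexHull {𝕜 V : Type*} [Ring 𝕜] [LinearOrder 𝕜]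
    [IsStrictOrderedRing 𝕜] [AddCommGroup V] [Module 𝕜 V] [DenselyOrdered 𝕜]
    [Module.IsTorsionFree 𝕜 V] {A s : Set V} {y : V} (hA : Convex 𝕜 A) (hsA : s ⊆ A)
    (hy : y ∈ A.extremePoints 𝕜) (hys : y ∈ convexHull 𝕜 s) : y ∈ s :=
  extremePoints_convexHull_subset
    (inter_extremePoints_subset_extremePoints_of_subset (convexHull_min hsA hA) ⟨hys, hy⟩)

section CoverPolyhedron

variable {E : Type*} [Fintype E] {Ps : Finset (Finset E)}

theorem convex_coverPolyhedron (Ps : Finset (Finset E)) : Convex ℝ (coverPolyhedron Ps) := by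
  rintro y ⟨hy0, hyP⟩ z ⟨hz0, hzP⟩ a b ha hb hab
  refine ⟨fun e => ?_, fun P hP => ?_⟩
  · have := hy0 e; have := hz0 e
    simp only [Pi.add_apply, Pi.smul_apply, smul_eq_mul]
    positivity
  · simp only [Pi.add_apply, Pi.smul_apply, smul_eq_mul, sum_add_distrib, ← mul_sum]
    nlinarith [hyP P hP, hzP P hP]

theorem mem_coverPolyhedron_of_le {y z : E → ℝ} (hy : y ∈ coverPolyhedron Ps) (hyz : y ≤ z) :
    z ∈ coverPolyhedron Ps :=
  ⟨fun e => (hy.1 e).trans (hyz e),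
    fun P hP => (hy.2 P hP).trans (sum_le_sum fun e _ => hyz e)⟩

theorem min_one_mem_coverPolyhedron {y : E → ℝ} (hy : y ∈ coverPolyhedron Ps) :
    (fun e => min (y e) 1) ∈ coverPolyhedron Ps := by
  refine ⟨fun e => le_min (hy.1 e) zero_le_one, fun P hP => ?_⟩
  by_cases hP1 : ∀ e ∈ P, y e ≤ 1
  · calc 1 ≤ ∑ e ∈ P, y e := hy.2 P hP
      _ = ∑ e ∈ P, min (y e) 1 := sum_congr rfl fun e he => (min_eq_left (hP1 e he)).symm
  · push Not at hP1
    obtain ⟨e, he, hye⟩ := hP1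
    calc 1 = min (y e) 1 := (min_eq_right hye.le).symm
      _ ≤ ∑ e ∈ P, min (y e) 1 :=
        single_le_sum (f := fun e => min (y e) 1) (fun e _ => le_min (hy.1 e) zero_le_one) he

theorem le_one_of_mem_extremePoints_coverPolyhedron {y : E → ℝ}
    (hy : y ∈ (coverPolyhedron Ps).extremePoints ℝ) (e : E) : y e ≤ 1 := by
  have hmin := min_one_mem_coverPolyhedron hy.1
  have hmid : y ∈ openSegment ℝ (fun e => min (y e) 1) (fun e => 2 * y e - min (y e) 1) :=
    ⟨1 / 2, 1 / 2, by norm_num, by norm_num, by norm_num, by funext e; simp only [Pi.add_apply, Pi.smul_apply, smul_eq_mul]; ring⟩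
  have hdouble : (fun e => 2 * y e - min (y e) 1) ∈ coverPolyhedron Ps :=
    mem_coverPolyhedron_of_le hy.1 fun e => by have := min_le_left (y e) 1; linarith
  exact min_eq_left_iff.mp (congrFun (hy.2 hmin hdouble hmid) e)

variable [DecidableEq E]

def IsCover (Ps : Finset (Finset E)) (S : Finset E) : Prop :=
  ∀ P ∈ Ps, (S ∩ P).Nonempty

theorem indicator_mem_coverPolyhedron {S : Finset E} (hS : IsCover Ps S) :
    (S : Set E).indicator 1 ∈ coverPolyhedron Ps := by
  refine ⟨fun e => Set.indicator_nonneg (fun _ _ => zero_le_one) e, fun P hP => ?_⟩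
  obtain ⟨e, he⟩ := hS P hP
  rw [mem_inter] at he
  calc (1 : ℝ) = (S : Set E).indicator 1 e := by simp [he.1]
    _ ≤ ∑ e ∈ P, (S : Set E).indicator 1 e :=
      single_le_sum (fun e _ => Set.indicator_nonneg (fun _ _ => zero_le_one) e) he.2

namespace IsFeasibleDecomp

variable {π : Finset E → ℝ} {ρ : E → ℝ} {x : Finset E → ℝ}

theorem sum_smul_indicator (hx : IsFeasibleDecomp Ps π ρ x) :
    ∑ S, x S • (S : Set E).indicator (1 : E → ℝ) = ρ := by
  funext e
  simp [Finset.sum_apply, Set.indicator_apply, ← hx.2.2.1 e, sum_filter]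

theorem isCover_of_ne_zero (hx : IsFeasibleDecomp Ps (fun _ => 1) ρ x) {S : Finset E}
    (hS : x S ≠ 0) : IsCover Ps S := by
  obtain ⟨hx0, hx1, -, hxP⟩ := hx
  intro P hP
  by_contra hSP
  have hsub : univ.filter (fun T : Finset E => (T ∩ P).Nonempty) ⊆ univ.erase S :=
    fun T hT => mem_erase.2 ⟨fun h => hSP (h ▸ (mem_filter.1 hT).2), mem_univ T⟩
  have := (hxP P hP).trans (sum_le_sum_of_subset_of_nonneg hsub fun T _ _ => hx0 T)
  rw [sum_erase_eq_sub (mem_univ S), hx1] at this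
  exact hS (le_antisymm (by linarith) (hx0 S))

theorem mem_convexHull_indicator (hx : IsFeasibleDecomp Ps (fun _ => 1) ρ x) :
    ρ ∈ convexHull ℝ ((fun S : Finset E => (S : Set E).indicator 1) '' {S | IsCover Ps S}) := by
  have hsupp : ∀ S ∈ univ, x S • (S : Set E).indicator (1 : E → ℝ) ≠ 0 → x S ≠ 0 :=
    fun S _ h hS => h (by rw [hS, zero_smul])
  rw [← hx.sum_smul_indicator, ← sum_filter_of_ne hsupp]
  refine (convex_convexHull ℝ _).sum_mem (fun S _ => hx.1 S) ?_
    fun S hS => subset_convexHull ℝ _ ⟨S, hx.isCover_of_ne_zero (mem_filter.1 hS).2, rfl⟩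
  rw [sum_filter_ne_zero, hx.2.1]

end IsFeasibleDecomp

end CoverPolyhedron

/-- If condition (⋆) is sufficient for feasibility for all affine requirements
`π_P = 1 − ∑_{e∈P} μ_e` with `μ ∈ [0,1]^E`, then every extreme point of the covering
polyhedron `Y_𝒫` is a 0-1 vector, i.e., `Y_𝒫` is integral. -/
theorem cond_sufficient_implies_mfmc {E : Type*} [Fintype E] [DecidableEq E]
    (Ps : Finset (Finset E))
    (hsuff : ∀ μ : E → ℝ, (∀ e, 0 ≤ μ e ∧ μ e ≤ 1) →
      ∀ ρ : E → ℝ, (∀ e, 0 ≤ ρ e ∧ ρ e ≤ 1) →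
      (∀ P ∈ Ps, 1 - ∑ e ∈ P, μ e ≤ ∑ e ∈ P, ρ e) →
      ∃ x : Finset E → ℝ,
        IsFeasibleDecomp Ps (fun P => 1 - ∑ e ∈ P, μ e) ρ x) :
    ∀ y ∈ Set.extremePoints ℝ (coverPolyhedron Ps), ∀ e, y e = 0 ∨ y e = 1 := by
  intro y hy e
  obtain ⟨x, hx⟩ := hsuff 0 (fun _ => ⟨le_rfl, zero_le_one⟩) y
    (fun f => ⟨hy.1.1 f, le_one_of_mem_extremePoints_coverPolyhedron hy f⟩)
    (fun P hP => by simpa using hy.1.2 P hP)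
  simp only [Pi.zero_apply, sum_const_zero, sub_zero] at hx
  obtain ⟨S, -, rfl⟩ := mem_of_mem_extremePoints_of_mem_convexHull (convex_coverPolyhedron Ps)
    (Set.image_subset_iff.2 fun S hS => indicator_mem_coverPolyhedron hS) hy
    hx.mem_convexHull_indicator
  by_cases he : e ∈ S <;> simp [he]
end

section
/- Let (E, 𝒫, ⪯) be an abstract network and let ρ, μ ∈ [0,1]^E satisfy ∑_{e∈P}(ρ_e + μ_e) ≥ 1 for all P ∈ 𝒫. Define α'_e := min{∑_{f ∈ (Q,e)} (μ_f + ρ_f) : Q ∈ 𝒫, e ∈ Q} and α_e := min{α'_e, 1 − ρ_e} for each e ∈ E (with α_e := 1 − ρ_e if no path contains e). Then for every P ∈ 𝒫: (1) α_{t_P} + μ_{t_P} + ρ_{t_P} ≥ 1, where t_P is the ⪯_P-maximal element of P; and (2) for every e ∈ P with e ≠ t_P there exists e' ∈ P with e ≺_P e' and α_{e'} ≤ α_e + μ_e + ρ_e. -/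
/-!
Write `w = μ + ρ`. If `α_e + w_e ≥ 1`, any later element `e'` of `P` works, as
`α_{e'} ≤ 1 - ρ_{e'} ≤ 1`. Otherwise `α_e = w((Q,e))` for a path `Q` through `e`, and the network
axiom yields a path `R ⊆ [Q,e] ∪ (e,P)`. As `w(R) ≥ 1 > w([Q,e])`, the path `R` leaves `[Q,e]`;
its first element `e'` outside `[Q,e]` lies in `(e,P)`, and
`α_{e'} ≤ w((R,e')) ≤ w([Q,e]) = α_e + w_e`. For the last element `t` of `P` the set `(t,P)` is
empty, so only the first alternative, `α_t + w_t ≥ 1`, remains.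
-/

open Finset

variable {E : Type*} [Fintype E] [DecidableEq E]

/-- The strict prefix `(P,e)` of an abstract path `P` (given as a duplicate-free list)
before the element `e`. -/
def listPre (P : List E) (e : E) : Finset E := (P.takeWhile (· ≠ e)).toFinset

/-- The prefix `[P,e]` of `P` up to and including `e`. -/
def listPreIncl (P : List E) (e : E) : Finset E := listPre P e ∪ {e}

/-- The suffix `[e,P]` of `P` from `e` (inclusive). -/
def listSufIncl (P : List E) (e : E) : Finset E := (P.dropWhile (· ≠ e)).toFinset

/-- The strict suffix `(e,P)` of `P` after `e`. -/
def listSuf (P : List E) (e : E) : Finset E := ((P.dropWhile (· ≠ e)).drop 1).toFinset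

/-- An abstract network: a system of paths, each a nonempty duplicate-free list
(encoding the linear order `⪯_P`), such that for any two paths `P, Q` crossing in an
element `e` there is a path `R ∈ 𝒫` contained in `[P,e] ∪ [e,Q]`. -/
def IsAbstractNetwork (Ps : Finset (List E)) : Prop :=
  (∀ P ∈ Ps, P ≠ [] ∧ P.Nodup) ∧
  ∀ P ∈ Ps, ∀ Q ∈ Ps, ∀ e, e ∈ P → e ∈ Q →
    ∃ R ∈ Ps, R.toFinset ⊆ listPreIncl P e ∪ listSufIncl Q e

section

variable {V : Type*} [DecidableEq V] {Ps : Finset (List V)} {w ℓ : V → ℝ}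

theorem notMem_listPre (P : List V) (e : V) : e ∉ listPre P e := by
  intro h
  simpa using List.mem_takeWhile_imp (List.mem_toFinset.mp h)

theorem listPreIncl_eq_insert (P : List V) (e : V) :
    listPreIncl P e = insert e (listPre P e) := by
  rw [listPreIncl, Finset.union_comm, ← Finset.insert_eq]

theorem exists_dropWhile_ne_eq_cons {P : List V} {e : V} (he : e ∈ P) :
    ∃ S, P.dropWhile (· ≠ e) = e :: S := by
  have hne : P.dropWhile (· ≠ e) ≠ [] := fun h => by
    simpa using List.dropWhile_eq_nil_iff.mp h e he
  obtain ⟨a, S, hS⟩ := List.exists_cons_of_ne_nil hne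
  have hhead := List.head_dropWhile_not (· ≠ e) hne
  simp only [hS, List.head_cons, decide_eq_false_iff_not, not_not] at hhead
  exact ⟨S, hhead ▸ hS⟩

theorem listSufIncl_eq_insert {P : List V} {e : V} (he : e ∈ P) :
    listSufIncl P e = insert e (listSuf P e) := by
  obtain ⟨S, hS⟩ := exists_dropWhile_ne_eq_cons he
  rw [listSufIncl, listSuf, hS]
  simp

theorem listSuf_nonempty {P : List V} {e : V} (he : e ∈ P) (hlast : P.getLast? ≠ some e) :
    (listSuf P e).Nonempty := by
  obtain ⟨S, hS⟩ := exists_dropWhile_ne_eq_cons he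
  cases S with
  | nil =>
    refine absurd ?_ hlast
    rw [← List.takeWhile_append_dropWhile (p := (· ≠ e)) (l := P), hS]
    exact List.getLast?_concat
  | cons b S => exact ⟨b, by rw [listSuf, hS]; simp⟩

theorem listSuf_eq_empty_of_getLast? {P : List V} (hP : P.Nodup) {t : V}
    (hlast : P.getLast? = some t) : listSuf P t = ∅ := by
  obtain ⟨T, rfl⟩ := List.getLast?_eq_some_iff.mp hlast
  have htT : t ∉ T := ((List.nodup_concat T t).mp (by simpa using hP)).1
  rw [listSuf, List.dropWhile_append_of_pos (fun x hx => by simpa using ne_of_mem_of_not_mem hx htT)]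
  simp

theorem exists_notMem_listPre_subset {R : List V} {S : Finset V} (h : ¬ R.toFinset ⊆ S) :
    ∃ x ∈ R, x ∉ S ∧ listPre R x ⊆ S := by
  induction R with
  | nil => simp at h
  | cons a R ih =>
    by_cases ha : a ∈ S
    · obtain ⟨x, hxR, hxS, hpre⟩ := ih fun hR => h (by simpa [Finset.insert_subset_iff] using ⟨ha, hR⟩)
      have hxa : a ≠ x := ne_of_mem_of_not_mem ha hxS
      refine ⟨x, List.mem_cons_of_mem a hxR, hxS, ?_⟩
      simpa [listPre, List.takeWhile_cons, hxa, Finset.insert_subset_iff, ha] using hpre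
    · exact ⟨a, List.mem_cons_self, ha, by simp [listPre]⟩

theorem one_le_or_exists_le_of_subset_union (hw : ∀ e, 0 ≤ w e)
    (hcond : ∀ P ∈ Ps, 1 ≤ ∑ e ∈ P.toFinset, w e)
    (hℓ : ∀ e, ∀ Q ∈ Ps, e ∈ Q → ℓ e ≤ ∑ f ∈ listPre Q e, w f)
    {R : List V} (hR : R ∈ Ps) {S X : Finset V} (hRSX : R.toFinset ⊆ S ∪ X) :
    1 ≤ ∑ f ∈ S, w f ∨ ∃ x ∈ X, ℓ x ≤ ∑ f ∈ S, w f := by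
  by_cases hRS : R.toFinset ⊆ S
  · exact .inl ((hcond R hR).trans (sum_le_sum_of_subset_of_nonneg hRS fun f _ _ => hw f))
  · obtain ⟨x, hxR, hxS, hpre⟩ := exists_notMem_listPre_subset hRS
    have hxX : x ∈ X := (mem_union.mp (hRSX (List.mem_toFinset.mpr hxR))).resolve_left hxS
    exact .inr ⟨x, hxX, (hℓ x R hR hxR).trans
      (sum_le_sum_of_subset_of_nonneg hpre fun f _ _ => hw f)⟩

theorem one_le_or_exists_listSuf_le (hAN : IsAbstractNetwork Ps) (hw : ∀ e, 0 ≤ w e)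
    (hcond : ∀ P ∈ Ps, 1 ≤ ∑ e ∈ P.toFinset, w e)
    (hℓ : ∀ e, ∀ Q ∈ Ps, e ∈ Q → ℓ e ≤ ∑ f ∈ listPre Q e, w f)
    {P Q : List V} (hP : P ∈ Ps) (hQ : Q ∈ Ps) {e : V} (heP : e ∈ P) (heQ : e ∈ Q)
    (hQe : ℓ e = ∑ f ∈ listPre Q e, w f) :
    1 ≤ ℓ e + w e ∨ ∃ e' ∈ listSuf P e, ℓ e' ≤ ℓ e + w e := by
  obtain ⟨R, hR, hRsub⟩ := hAN.2 Q hQ P hP e heQ heP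
  have hRSX : R.toFinset ⊆ listPreIncl Q e ∪ listSuf P e := by
    rw [listSufIncl_eq_insert heP] at hRsub
    refine hRsub.trans (union_subset subset_union_left (insert_subset ?_ subset_union_right))
    simp [listPreIncl]
  have hsum : ∑ f ∈ listPreIncl Q e, w f = ℓ e + w e := by
    rw [listPreIncl_eq_insert, sum_insert (notMem_listPre Q e), hQe, add_comm]
  simpa only [hsum] using one_le_or_exists_le_of_subset_union hw hcond hℓ hR hRSX

end

/-- Properties of the truncated shortest-path labels `α` in an abstract network:
(1) at the last element `t_P` of any path, `α_{t_P} + μ_{t_P} + ρ_{t_P} ≥ 1`;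
(2) every non-final element `e` of a path `P` has a successor `e'` (strictly later
on `P`) with `α_{e'} ≤ α_e + μ_e + ρ_e`. -/
theorem abstract_network_alpha_successor
    (Ps : Finset (List E)) (hAN : IsAbstractNetwork Ps)
    (ρ μ : E → ℝ) (hρ : ∀ e, 0 ≤ ρ e ∧ ρ e ≤ 1) (hμ : ∀ e, 0 ≤ μ e ∧ μ e ≤ 1)
    (hcond : ∀ P ∈ Ps, 1 ≤ ∑ e ∈ P.toFinset, (ρ e + μ e))
    (α : E → ℝ)
    -- `α e = min { ∑_{f ∈ (Q,e)} (μ f + ρ f) : Q ∈ 𝒫, e ∈ Q } ∪ {1 - ρ e}`: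
    (hα₁ : ∀ e, α e ≤ 1 - ρ e)
    (hα₂ : ∀ e, ∀ Q ∈ Ps, e ∈ Q → α e ≤ ∑ f ∈ listPre Q e, (μ f + ρ f))
    (hα₃ : ∀ e, α e = 1 - ρ e ∨ ∃ Q ∈ Ps, e ∈ Q ∧ α e = ∑ f ∈ listPre Q e, (μ f + ρ f)) :
    ∀ P ∈ Ps,
      (∀ t, P.getLast? = some t → 1 ≤ α t + μ t + ρ t) ∧
      (∀ e ∈ P, P.getLast? ≠ some e →
        ∃ e' ∈ listSuf P e, α e' ≤ α e + μ e + ρ e) := by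
  intro P hP
  have hw : ∀ e, 0 ≤ μ e + ρ e := fun e => add_nonneg (hμ e).1 (hρ e).1
  have hcond' : ∀ P ∈ Ps, 1 ≤ ∑ e ∈ P.toFinset, (μ e + ρ e) := by
    simpa only [add_comm (ρ _)] using hcond
  have key : ∀ e ∈ P, 1 ≤ α e + μ e + ρ e ∨ ∃ e' ∈ listSuf P e, α e' ≤ α e + μ e + ρ e := by
    intro e heP
    rcases hα₃ e with h | ⟨Q, hQ, heQ, h⟩
    · exact .inl (by linarith [(hμ e).1])
    · simpa only [add_assoc] using one_le_or_exists_listSuf_le hAN hw hcond' hα₂ hP hQ heP heQ h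
  refine ⟨fun t ht => (key t (List.mem_of_getLast? ht)).resolve_right ?_, fun e heP hlast => ?_⟩
  · simp [listSuf_eq_empty_of_getLast? (hAN.1 P hP).2 ht]
  · refine (key e heP).elim (fun h => ?_) id
    obtain ⟨b, hb⟩ := listSuf_nonempty heP hlast
    exact ⟨b, hb, by linarith [hα₁ b, (hρ b).1]⟩
end

section
/- Let (E, 𝒫, ⪯) be an abstract network in which all paths share a common first element s (i.e., s_P = s for all P) and let γ ∈ ℝ_+^E. Suppose T ⊆ E and ψ ∈ (ℝ ∪ {∞})^E satisfy the invariant: for every P ∈ 𝒫 there is e ∈ P with [e,P] ∩ T = ∅ and ψ_e ≤ ∑_{f ∈ [P,e]} γ_f. If additionally ψ_t ≤ ψ_f for all f ∈ E \ T, where t is the common last element of all paths, and ψ_t = ∑_{f ∈ Q} γ_f for some Q ∈ 𝒫, then Q is a shortest path: ∑_{f∈Q} γ_f ≤ ∑_{f∈P} γ_f for all P ∈ 𝒫. -/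
open Finset

variable {E : Type*} [Fintype E] [DecidableEq E]

theorem mem_listSufIncl_self {α : Type*} [DecidableEq α] {P : List α} {e : α} (he : e ∈ P) :
    e ∈ listSufIncl P e := by
  rw [listSufIncl, List.mem_toFinset]
  rw [← List.takeWhile_append_dropWhile (p := fun x => decide (x ≠ e)) (l := P),
    List.mem_append] at he
  exact he.resolve_left fun h => by simpa using List.mem_takeWhile_imp h

theorem listPreIncl_subset_toFinset {α : Type*} [DecidableEq α] {P : List α} {e : α}
    (he : e ∈ P) : listPreIncl P e ⊆ P.toFinset :=
  union_subset
    (Multiset.toFinset_subset.mpr (Multiset.coe_subset.mpr (P.takeWhile_sublist _).subset))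
    (singleton_subset_iff.mpr (List.mem_toFinset.mpr he))

theorem abstract_dijkstra_termination_general
    (Ps : Finset (List E))
    (t : E)
    (γ : E → ℝ) (hγ : ∀ e, 0 ≤ γ e)
    (T : Finset E) (ψ : E → EReal)
    (hinv : ∀ P ∈ Ps, ∃ e ∈ P, (listSufIncl P e ∩ T = ∅) ∧
      ψ e ≤ ((∑ f ∈ listPreIncl P e, γ f : ℝ) : EReal))
    (hmin : ∀ f ∉ T, ψ t ≤ ψ f)
    (Q : List E)
    (hψt : ψ t = ((∑ f ∈ Q.toFinset, γ f : ℝ) : EReal)) :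
    ∀ P ∈ Ps, ∑ f ∈ Q.toFinset, γ f ≤ ∑ f ∈ P.toFinset, γ f := by
  intro P hP
  obtain ⟨e, heP, hsuf, hψe⟩ := hinv P hP
  have heT : e ∉ T :=
    disjoint_left.mp (disjoint_iff_inter_eq_empty.mpr hsuf) (mem_listSufIncl_self heP)
  have hpre : ∑ f ∈ listPreIncl P e, γ f ≤ ∑ f ∈ P.toFinset, γ f :=
    sum_le_sum_of_subset_of_nonneg (listPreIncl_subset_toFinset heP) fun f _ _ => hγ f
  have hcoe :
      ((∑ f ∈ Q.toFinset, γ f : ℝ) : EReal) ≤ ((∑ f ∈ P.toFinset, γ f : ℝ) : EReal) :=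
    calc _ = ψ t := hψt.symm
      _ ≤ ψ e := hmin e heT
      _ ≤ _ := hψe
      _ ≤ _ := EReal.coe_le_coe_iff.mpr hpre
  exact EReal.coe_le_coe_iff.mp hcoe

/-- Correctness at termination of the abstract Dijkstra algorithm: if the labels `ψ`
and scanned set `T` satisfy the invariant (every path `P` has some element `e` with
`[e,P] ∩ T = ∅` and `ψ_e ≤ ∑_{f ∈ [P,e]} γ_f`), `ψ_t` is minimal among unscanned
elements, and `ψ_t` is realized by the path `Q`, then `Q` is a shortest path. -/
theorem abstract_dijkstra_termination
    (Ps : Finset (List E)) (hAN : IsAbstractNetwork Ps)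
    (s t : E) (hs : ∀ P ∈ Ps, P.head? = some s) (ht : ∀ P ∈ Ps, P.getLast? = some t)
    (γ : E → ℝ) (hγ : ∀ e, 0 ≤ γ e)
    (T : Finset E) (ψ : E → EReal)
    (hinv : ∀ P ∈ Ps, ∃ e ∈ P, (listSufIncl P e ∩ T = ∅) ∧
      ψ e ≤ ((∑ f ∈ listPreIncl P e, γ f : ℝ) : EReal))
    (hmin : ∀ f ∉ T, ψ t ≤ ψ f)
    (Q : List E) (hQ : Q ∈ Ps)
    (hψt : ψ t = ((∑ f ∈ Q.toFinset, γ f : ℝ) : EReal)) :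
    ∀ P ∈ Ps, ∑ f ∈ Q.toFinset, γ f ≤ ∑ f ∈ P.toFinset, γ f :=
  abstract_dijkstra_termination_general Ps t γ hγ T ψ hinv hmin Q hψt
end

section
/- Let D = (V,A) be a directed acyclic graph with designated nodes s, t, and let 𝒫 be the set of s-t-paths (each identified with its set of nodes and arcs). Let π : 𝒫 → [0,1] satisfy the conservation law π_P + π_Q = π_{P×_e Q} + π_{Q×_e P} for all P, Q ∈ 𝒫 and e ∈ P ∩ Q, where P×_e Q denotes the s-t-path following P up to e and Q after e. Then there exists μ ∈ [0,1]^{V∪A} such that π_P = 1 − ∑_{e∈P} μ_e for all P ∈ 𝒫. -/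
open Finset

variable {V : Type*} [Fintype V] [DecidableEq V]

/-- `p` is a simple path from `s` to `v` in the digraph with arc set `Arcs`,
given as its sequence of nodes. -/
def IsPathOn (Arcs : Finset (V × V)) (s v : V) (p : List V) : Prop :=
  p.head? = some s ∧ p.getLast? = some v ∧ p.Nodup ∧
    p.Chain' (fun u w => (u, w) ∈ Arcs)

/-- The set of elements (nodes and arcs) of a path given by its node sequence. -/
def pathElems (p : List V) : Finset (V ⊕ V × V) :=
  p.toFinset.image Sum.inl ∪ (p.zip p.tail).toFinset.image Sum.inr

/-- The splice `P ×_e Q` of two paths at a common element `e`: follow `P` up to `e`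
and `Q` from `e` onwards. -/
def splice (p q : List V) (v : V) : List V :=
  p.takeWhile (· ≠ v) ++ q.dropWhile (· ≠ v)

/-- The digraph is acyclic. -/
def IsAcyclic (Arcs : Finset (V × V)) : Prop :=
  ∀ (v : V) (l : List V), List.Chain (fun u w => (u, w) ∈ Arcs) v l → v ∉ l

/-!
Choose for every node `v` an `s`-`t`-path `R v` through `v` on which `π` is maximal, and for a
path `p` through `v` let `p_v` follow `R v` up to `v` and `p` from `v` on; acyclicity makes every
such splice a simple path. For an arc `(u, w)` of `p`, the conservation law applied at `w` to
`p_u` and `R w` shows that `π p_w - π p_u` depends only on the arc: it is the weight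
`π (R w) - π (R u up to u, then (u, w), then R w after w)`, which lies in `[0, 1]` by the
maximality of `R w`. Since `p_s = p` and `p_t = R t`, telescoping along `p` gives
`π p = π (R t) - ∑ (weights of the arcs of p)`, and `t` carries the remaining weight `1 - π (R t)`.
-/

namespace List

variable {α : Type*}

theorem Nodup.not_mem_of_append_cons {v : α} {a b : List α} (h : (a ++ v :: b).Nodup) :
    v ∉ a :=
  fun hv => disjoint_of_nodup_append h hv mem_cons_self

theorem Nodup.zip_tail {p : List α} (hp : p.Nodup) : (p.zip p.tail).Nodup :=
  Nodup.of_map Prod.snd <| by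
    rw [map_snd_zip (by simp)]
    exact hp.sublist (tail_sublist p)

variable [DecidableEq α]

theorem takeWhile_ne_append_cons {v : α} {a : List α} (b : List α) (h : v ∉ a) :
    (a ++ v :: b).takeWhile (· ≠ v) = a := by
  rw [takeWhile_append_of_pos (fun x hx => decide_eq_true (ne_of_mem_of_not_mem hx h))]
  simp

theorem dropWhile_ne_append_cons {v : α} {a : List α} (b : List α) (h : v ∉ a) :
    (a ++ v :: b).dropWhile (· ≠ v) = v :: b := by
  rw [dropWhile_append_of_pos (fun x hx => decide_eq_true (ne_of_mem_of_not_mem hx h))]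
  simp

theorem takeWhile_ne_append_cons_tail_dropWhile {v : α} {l : List α} (h : v ∈ l) :
    l.takeWhile (· ≠ v) ++ v :: (l.dropWhile (· ≠ v)).tail = l := by
  induction l with
  | nil => simp at h
  | cons x l ih =>
    by_cases hx : x = v
    · simp [hx]
    · have hxv : decide (x ≠ v) = true := decide_eq_true hx
      rw [takeWhile_cons_of_pos (p := (· ≠ v)) hxv, dropWhile_cons_of_pos (p := (· ≠ v)) hxv,
        cons_append, ih ((mem_cons.1 h).resolve_left (Ne.symm hx))]

end List

section Paths

variable {α : Type*} {Arcs : Finset (α × α)} {s t v : α} {a b c d : List α}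

theorem IsAcyclic.disjoint_of_isChain (hacyc : IsAcyclic Arcs)
    (h₁ : (a ++ [v]).IsChain (fun u w => (u, w) ∈ Arcs))
    (h₂ : (v :: d).IsChain (fun u w => (u, w) ∈ Arcs)) : a.Disjoint d := by
  intro x hxa hxd
  obtain ⟨a₁, a₂, rfl⟩ := List.append_of_mem hxa
  obtain ⟨d₁, d₂, rfl⟩ := List.append_of_mem hxd
  have hxv : (x :: (a₂ ++ [v])).IsChain (fun u w => (u, w) ∈ Arcs) := by
    simpa using (List.isChain_split.1 (by simpa using h₁)).2
  have hvx := (List.isChain_cons_split.1 h₂).1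
  exact hacyc v _ (List.isChain_cons_split.2 ⟨hvx, hxv⟩) (by simp)

namespace IsPathOn

theorem nodup {p : List α} (hp : IsPathOn Arcs s t p) : p.Nodup := hp.2.2.1

theorem exists_eq_cons {p : List α} (hp : IsPathOn Arcs s t p) : ∃ m, p = s :: m := by
  obtain ⟨h, _⟩ := hp
  cases p with
  | nil => simp at h
  | cons x m => exact ⟨m, by simpa using h⟩

theorem target_mem {p : List α} (hp : IsPathOn Arcs s t p) : t ∈ p :=
  List.mem_of_getLast? hp.2.1

theorem eq_nil_of_append_cons_target (hp : IsPathOn Arcs s t (a ++ t :: b)) : b = [] := by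
  cases b with
  | nil => rfl
  | cons x b =>
    have hlast := hp.2.1
    rw [List.getLast?_append_cons, List.getLast?_cons_cons] at hlast
    exact ((List.nodup_cons.1 hp.nodup.of_append_right).1 (List.mem_of_getLast? hlast)).elim

theorem append_cons_of_append_cons (hacyc : IsAcyclic Arcs)
    (h₁ : IsPathOn Arcs s t (a ++ v :: b)) (h₂ : IsPathOn Arcs s t (c ++ v :: d)) :
    IsPathOn Arcs s t (a ++ v :: d) := by
  obtain ⟨hs, -, hnd₁, hch₁⟩ := h₁
  obtain ⟨-, ht, hnd₂, hch₂⟩ := h₂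
  have hav := (List.isChain_split.1 hch₁).1
  have hvd := (List.isChain_split.1 hch₂).2
  refine ⟨by cases a <;> simpa using hs, by rwa [List.getLast?_append_cons] at ht ⊢, ?_, ?_⟩
  · exact hnd₁.of_append_left.append hnd₂.of_append_right <|
      List.disjoint_cons_right.2 ⟨hnd₁.not_mem_of_append_cons, hacyc.disjoint_of_isChain hav hvd⟩
  · exact (by simpa using hav.append_overlap hvd (List.cons_ne_nil v []) :
      (a ++ v :: d).IsChain _)

end IsPathOn

end Paths

theorem splice_append_cons {α : Type*} [DecidableEq α] {v : α} {a b c d : List α} (ha : v ∉ a)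
    (hc : v ∉ c) : splice (a ++ v :: b) (c ++ v :: d) v = a ++ v :: d := by
  rw [splice, List.takeWhile_ne_append_cons b ha, List.dropWhile_ne_append_cons d hc]

section Conservation

variable {α : Type*} [DecidableEq α] {Arcs : Finset (α × α)} {s t : α} {π : List α → ℝ}

def ConservationLaw (Arcs : Finset (α × α)) (s t : α) (π : List α → ℝ) : Prop :=
  ∀ p q : List α, IsPathOn Arcs s t p → IsPathOn Arcs s t q →
    ∀ v : α, v ∈ p → v ∈ q → π (splice p q v) + π (splice q p v) = π p + π q

theorem ConservationLaw.exchange (hcons : ConservationLaw Arcs s t π) {v : α}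
    {a b c d : List α} (h₁ : IsPathOn Arcs s t (a ++ v :: b))
    (h₂ : IsPathOn Arcs s t (c ++ v :: d)) :
    π (a ++ v :: d) + π (c ++ v :: b) = π (a ++ v :: b) + π (c ++ v :: d) := by
  have h := hcons _ _ h₁ h₂ v (by simp) (by simp)
  have ha := h₁.nodup.not_mem_of_append_cons
  have hc := h₂.nodup.not_mem_of_append_cons
  rwa [splice_append_cons ha hc, splice_append_cons hc ha] at h

variable (R : α → List α)

def prefixBefore (v : α) : List α := (R v).takeWhile (· ≠ v)

def suffixAfter (v : α) : List α := ((R v).dropWhile (· ≠ v)).tail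

def viaArc (u w : α) : List α := prefixBefore R u ++ u :: w :: suffixAfter R w

variable (Arcs s t π) in
open Classical in
noncomputable def arcWeight (e : α × α) : ℝ :=
  if IsPathOn Arcs s t (viaArc R e.1 e.2) then π (R e.2) - π (viaArc R e.1 e.2) else 0

variable {R}

theorem prefixBefore_append_cons_suffixAfter {v : α} (h : v ∈ R v) :
    prefixBefore R v ++ v :: suffixAfter R v = R v :=
  List.takeWhile_ne_append_cons_tail_dropWhile h

theorem prefixBefore_eq_nil (hs : IsPathOn Arcs s t (R s)) : prefixBefore R s = [] := by
  obtain ⟨m, hm⟩ := hs.exists_eq_cons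
  simp [prefixBefore, hm]

theorem IsPathOn.prefixBefore_append_cons {v : α} {l m : List α}
    (hp : IsPathOn Arcs s t (l ++ v :: m)) (hacyc : IsAcyclic Arcs)
    (hv : IsPathOn Arcs s t (R v)) (hvR : v ∈ R v) :
    IsPathOn Arcs s t (prefixBefore R v ++ v :: m) := by
  rw [← prefixBefore_append_cons_suffixAfter hvR] at hv
  exact hv.append_cons_of_append_cons hacyc hp

theorem ConservationLaw.telescope_step (hacyc : IsAcyclic Arcs)
    (hcons : ConservationLaw Arcs s t π)
    (hR : ∀ v p, IsPathOn Arcs s t p → v ∈ p → IsPathOn Arcs s t (R v) ∧ v ∈ R v)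
    {l m : List α} {u w : α} (hp : IsPathOn Arcs s t (l ++ u :: w :: m)) :
    π (prefixBefore R u ++ u :: w :: m) =
      π (prefixBefore R w ++ w :: m) - arcWeight Arcs s t π R (u, w) := by
  obtain ⟨hRu, huR⟩ := hR u _ hp (by simp)
  obtain ⟨hRw, hwR⟩ := hR w _ hp (by simp)
  have hX : IsPathOn Arcs s t ((prefixBefore R u ++ [u]) ++ w :: m) := by
    simpa using hp.prefixBefore_append_cons hacyc hRu huR
  rw [← prefixBefore_append_cons_suffixAfter hwR] at hRw
  have hvia : viaArc R u w = (prefixBefore R u ++ [u]) ++ w :: suffixAfter R w := by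
    simp [viaArc]
  have hpath : IsPathOn Arcs s t (viaArc R u w) :=
    hvia ▸ hX.append_cons_of_append_cons hacyc hRw
  have hex := hcons.exchange hX hRw
  rw [← hvia, prefixBefore_append_cons_suffixAfter hwR] at hex
  simp only [List.append_assoc, List.singleton_append] at hex
  rw [arcWeight, if_pos hpath]
  linarith

theorem ConservationLaw.telescope (hacyc : IsAcyclic Arcs) (hcons : ConservationLaw Arcs s t π)
    (hR : ∀ v p, IsPathOn Arcs s t p → v ∈ p → IsPathOn Arcs s t (R v) ∧ v ∈ R v)
    {m : List α} : ∀ {l : List α} {v : α}, IsPathOn Arcs s t (l ++ v :: m) →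
      π (prefixBefore R v ++ v :: m) =
        π (R t) - (((v :: m).zip m).map (arcWeight Arcs s t π R)).sum := by
  induction m with
  | nil =>
    intro l v hp
    obtain rfl : v = t := by simpa using hp.2.1
    obtain ⟨hRt, htR⟩ := hR v _ hp (by simp)
    rw [← prefixBefore_append_cons_suffixAfter htR] at hRt ⊢
    rw [hRt.eq_nil_of_append_cons_target]
    simp
  | cons w m ih =>
    intro l v hp
    have hw : IsPathOn Arcs s t ((l ++ [v]) ++ w :: m) := by simpa using hp
    rw [hcons.telescope_step hacyc hR hp, ih hw, List.zip_cons_cons, List.map_cons,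
      List.sum_cons]
    ring

theorem ConservationLaw.eq_sub_sum_arcWeight (hacyc : IsAcyclic Arcs)
    (hcons : ConservationLaw Arcs s t π)
    (hR : ∀ v p, IsPathOn Arcs s t p → v ∈ p → IsPathOn Arcs s t (R v) ∧ v ∈ R v)
    {p : List α} (hp : IsPathOn Arcs s t p) :
    π p = π (R t) - ((p.zip p.tail).map (arcWeight Arcs s t π R)).sum := by
  obtain ⟨m, rfl⟩ := hp.exists_eq_cons
  have h := hcons.telescope hacyc hR (l := []) hp
  rwa [prefixBefore_eq_nil (hR s _ hp (by simp)).1, List.nil_append] at h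

theorem arcWeight_mem_Icc (hπ01 : ∀ p, IsPathOn Arcs s t p → 0 ≤ π p ∧ π p ≤ 1)
    (hR : ∀ v p, IsPathOn Arcs s t p → v ∈ p →
      IsPathOn Arcs s t (R v) ∧ v ∈ R v ∧ π p ≤ π (R v))
    (e : α × α) : arcWeight Arcs s t π R e ∈ Set.Icc 0 1 := by
  rw [arcWeight]
  split_ifs with h
  · obtain ⟨hRw, -, hle⟩ := hR e.2 _ h (by simp [viaArc])
    have := hπ01 _ h
    have := hπ01 _ hRw
    constructor <;> linarith
  · simp

end Conservation

theorem exists_optimal_path_through {α : Type*} [Fintype α] (Arcs : Finset (α × α)) (s t : α)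
    (π : List α → ℝ) :
    ∃ R : α → List α, ∀ v p, IsPathOn Arcs s t p → v ∈ p →
      IsPathOn Arcs s t (R v) ∧ v ∈ R v ∧ π p ≤ π (R v) := by
  have hfin (v : α) : {p | IsPathOn Arcs s t p ∧ v ∈ p}.Finite :=
    (List.finite_length_le α (Fintype.card α)).subset fun p hp => hp.1.nodup.length_le_card
  have hopt (v : α) : ∃ r, ∀ p, IsPathOn Arcs s t p → v ∈ p →
      IsPathOn Arcs s t r ∧ v ∈ r ∧ π p ≤ π r := by
    by_cases hne : {p | IsPathOn Arcs s t p ∧ v ∈ p}.Nonempty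
    · obtain ⟨r, ⟨hr, hvr⟩, hmax⟩ := Set.exists_max_image _ π (hfin v) hne
      exact ⟨r, fun p hp hvp => ⟨hr, hvr, hmax p ⟨hp, hvp⟩⟩⟩
    · exact ⟨[], fun p hp hvp => (hne ⟨p, hp, hvp⟩).elim⟩
  choose R hR using hopt
  exact ⟨R, hR⟩

theorem sum_pathElems {α M : Type*} [DecidableEq α] [AddCommMonoid M] (f : α → M)
    (g : α × α → M) {p : List α} (hp : p.Nodup) :
    ∑ e ∈ pathElems p, Sum.elim f g e = ∑ v ∈ p.toFinset, f v + ((p.zip p.tail).map g).sum := by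
  have hdisj : Disjoint (p.toFinset.image Sum.inl) ((p.zip p.tail).toFinset.image Sum.inr) := by
    simp [Finset.disjoint_left]
  rw [pathElems, Finset.sum_union hdisj, Finset.sum_image Sum.inl_injective.injOn,
    Finset.sum_image Sum.inr_injective.injOn, ← List.sum_toFinset g hp.zip_tail]
  rfl

/-- If a requirement function `π ∈ [0,1]^𝒫` on the `s`-`t`-paths of a DAG satisfies
the conservation law `π_P + π_Q = π_{P×_e Q} + π_{Q×_e P}` at every common element,
then `π` is affine: there are weights `μ ∈ [0,1]` on nodes and arcs with
`π_P = 1 − ∑_{e∈P} μ_e` for every path `P`. -/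
theorem conservation_law_implies_affine
    (Arcs : Finset (V × V)) (s t : V) (hacyc : IsAcyclic Arcs)
    (π : List V → ℝ)
    (hπ01 : ∀ p : List V, IsPathOn Arcs s t p → 0 ≤ π p ∧ π p ≤ 1)
    (hcons : ∀ p q : List V, IsPathOn Arcs s t p → IsPathOn Arcs s t q →
      ∀ v : V, v ∈ p → v ∈ q → π (splice p q v) + π (splice q p v) = π p + π q) :
    ∃ μ : V ⊕ V × V → ℝ, (∀ e, 0 ≤ μ e ∧ μ e ≤ 1) ∧
      ∀ p : List V, IsPathOn Arcs s t p → π p = 1 - ∑ e ∈ pathElems p, μ e := by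
  have hC : ConservationLaw Arcs s t π := hcons
  obtain ⟨R, hR⟩ := exists_optimal_path_through Arcs s t π
  by_cases hne : ∃ p, IsPathOn Arcs s t p
  swap
  · exact ⟨0, fun _ => by simp, fun p hp => (hne ⟨p, hp⟩).elim⟩
  obtain ⟨p₀, hp₀⟩ := hne
  have hπt := hπ01 _ (hR t p₀ hp₀ hp₀.target_mem).1
  refine ⟨Sum.elim (fun v => if v = t then 1 - π (R t) else 0) (arcWeight Arcs s t π R),
    ?_, fun p hp => ?_⟩
  · rintro (v | e)
    · by_cases hv : v = t <;> simp [hv, hπt.1, hπt.2]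
    · exact arcWeight_mem_Icc hπ01 hR e
  · rw [sum_pathElems _ _ hp.nodup, Finset.sum_ite_eq',
      if_pos (List.mem_toFinset.2 hp.target_mem),
      hC.eq_sub_sum_arcWeight hacyc (fun v p hp hv => (hR v p hp hv).imp_right And.left) hp]
    ring
end
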